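/- arXiv:2508.14651 — 7 statements merged into one kernel-verified Lean document; each statement's English description precedes it below -/
import Mathlib

section
/- Let I be an ideal of C(X). The u^I-topology and the m^I-topology on C(X) coincide if and only if X is I-pseudocompact. -/
open Set Topology TopologicalSpace Pointwise

/-- `⋂ Z[I] = ⋂_{g ∈ I} Z(g)`, the intersection of the zero sets of members of `I`. -/
def zInter {X : Type*} [TopologicalSpace X] (I : Ideal C(X, ℝ)) : Set X :=
  {x | ∀ g ∈ I, g x = 0}

/-- `B_u(f, I, ε) = {g ∈ C(X) : sup_{x ∈ X} |f x - g x| < ε and f - g ∈ I}`. -/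
def uBall {X : Type*} [TopologicalSpace X] (I : Ideal C(X, ℝ)) (f : C(X, ℝ)) (ε : ℝ) :
    Set C(X, ℝ) :=
  {g | (∃ M, M < ε ∧ ∀ x, |f x - g x| ≤ M) ∧ f - g ∈ I}

/-- The `u^I`-topology on `C(X)`, with open base `{B_u(f, I, ε) : f ∈ C(X), ε > 0}`. -/
def uTopology {X : Type*} [TopologicalSpace X] (I : Ideal C(X, ℝ)) :
    TopologicalSpace C(X, ℝ) :=
  TopologicalSpace.generateFrom {B | ∃ f ε, 0 < ε ∧ B = uBall I f ε}

/-- `B_m(f, I, u) = {g ∈ C(X) : |f x - g x| < u x for all x ∈ X and f - g ∈ I}`. -/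
def mBall {X : Type*} [TopologicalSpace X] (I : Ideal C(X, ℝ)) (f u : C(X, ℝ)) :
    Set C(X, ℝ) :=
  {g | (∀ x, |f x - g x| < u x) ∧ f - g ∈ I}

/-- The `m^I`-topology on `C(X)`, with open base
`{B_m(f, I, u) : f ∈ C(X), u ∈ C₊(X)}`. -/
def mTopology {X : Type*} [TopologicalSpace X] (I : Ideal C(X, ℝ)) :
    TopologicalSpace C(X, ℝ) :=
  TopologicalSpace.generateFrom {B | ∃ f u, (∀ x, 0 < u x) ∧ B = mBall I f u}

/-- A subset `Y` of `X` is bounded if every `f ∈ C(X)` is bounded on `Y`. -/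
def BoundedOn {X : Type*} [TopologicalSpace X] (Y : Set X) : Prop :=
  ∀ f : C(X, ℝ), ∃ M : ℝ, ∀ x ∈ Y, |f x| ≤ M

/-- `X` is `I`-pseudocompact if `X ∖ ⋂ Z[I]` is a bounded subset of `X`. -/
def IPseudocompact {X : Type*} [TopologicalSpace X] (I : Ideal C(X, ℝ)) : Prop :=
  BoundedOn (zInter I)ᶜ

/-- A subset `S` of `X` is pseudocompact (as a subspace) if every continuous
real-valued function on the subspace `S` is bounded. -/
def PseudocompactOn {X : Type*} [TopologicalSpace X] (S : Set X) : Prop :=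
  ∀ g : C(S, ℝ), ∃ M : ℝ, ∀ y : S, |g y| ≤ M

/-!
A `u^I`-ball `B_u(g, I, δ)` lies inside the `m^I`-ball `B_m(g, I, v)` exactly when `δ ≤ v` off
`⋂ Z[I]`: on `⋂ Z[I]` every `h` with `g - h ∈ I` agrees with `g`, while at a point `x ∉ ⋂ Z[I]` the
ideal contains, for each `c ≥ 0`, a function bounded by `c` and equal to `c` at `x`. So the two
topologies coincide iff every positive continuous `v` is bounded away from `0` on `X ∖ ⋂ Z[I]`,
which (apply it to `1 / (1 + |f|)`, resp. bound `1 / v`) is the boundedness of `X ∖ ⋂ Z[I]`.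
-/

lemma Ideal.sub_mem_of_sub_mem {R : Type*} [Ring R] {I : Ideal R} {a b c : R}
    (hab : a - b ∈ I) (hbc : b - c ∈ I) : a - c ∈ I := by
  simpa using I.add_mem hab hbc

section BoundedOn

variable {X : Type*} [TopologicalSpace X]

lemma boundedOn_iff_forall_pos {Y : Set X} :
    BoundedOn Y ↔ ∀ v : C(X, ℝ), (∀ x, 0 < v x) → ∃ ε > 0, ∀ x ∈ Y, ε ≤ v x := by
  constructor
  · intro hY v hv
    obtain ⟨M, hM⟩ := hY ⟨fun x => (v x)⁻¹, v.continuous.inv₀ fun x => (hv x).ne'⟩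
    refine ⟨(max M 1)⁻¹, by positivity, fun x hx => inv_le_of_inv_le₀ (hv x) ?_⟩
    exact (le_abs_self _).trans ((hM x hx).trans (le_max_left M 1))
  · intro hpos f
    have hv : ∀ x, 0 < 1 + |f x| := fun x => by positivity
    obtain ⟨ε, hε, hεv⟩ := hpos ⟨fun x => (1 + |f x|)⁻¹,
      (continuous_const.add f.continuous.abs).inv₀ fun x => (hv x).ne'⟩ fun x => inv_pos.2 (hv x)
    refine ⟨ε⁻¹ - 1, fun x hx => ?_⟩
    have : 1 + |f x| ≤ ε⁻¹ := le_inv_of_le_inv₀ hε (hεv x hx)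
    linarith

end BoundedOn

section Balls

variable {X : Type*} [TopologicalSpace X] {I : Ideal C(X, ℝ)}

lemma mem_uBall_self (f : C(X, ℝ)) {ε : ℝ} (hε : 0 < ε) : f ∈ uBall I f ε :=
  ⟨⟨0, hε, fun x => by simp⟩, by simp⟩

lemma mem_mBall_self (f : C(X, ℝ)) {u : C(X, ℝ)} (hu : ∀ x, 0 < u x) : f ∈ mBall I f u :=
  ⟨fun x => by simpa using hu x, by simp⟩

lemma uBall_subset_uBall (g : C(X, ℝ)) {δ ε : ℝ} (h : δ ≤ ε) : uBall I g δ ⊆ uBall I g ε :=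
  fun _ ⟨⟨M, hM, hMb⟩, hI⟩ => ⟨⟨M, hM.trans_le h, hMb⟩, hI⟩

lemma uBall_subset_uBall_of_mem {f g : C(X, ℝ)} {ε : ℝ} (hg : g ∈ uBall I f ε) :
    ∃ δ > 0, uBall I g δ ⊆ uBall I f ε := by
  obtain ⟨⟨M, hM, hMb⟩, hfg⟩ := hg
  refine ⟨ε - M, by linarith, fun h ⟨⟨M', hM', hM'b⟩, hgh⟩ => ⟨⟨M + M', by linarith, fun x => ?_⟩,
    Ideal.sub_mem_of_sub_mem hfg hgh⟩⟩
  calc |f x - h x| ≤ |f x - g x| + |g x - h x| := abs_sub_le _ _ _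
    _ ≤ M + M' := add_le_add (hMb x) (hM'b x)

lemma mBall_subset_mBall_of_mem {f g u : C(X, ℝ)} (hg : g ∈ mBall I f u) :
    mBall I g (u - |f - g|) ⊆ mBall I f u := by
  obtain ⟨-, hfg⟩ := hg
  refine fun h ⟨hgh, hI⟩ => ⟨fun x => ?_, Ideal.sub_mem_of_sub_mem hfg hI⟩
  have := hgh x
  simp only [ContinuousMap.sub_apply, ContinuousMap.abs_apply] at this
  linarith [abs_sub_le (f x) (g x) (h x)]

lemma mBall_const_subset_uBall (g : C(X, ℝ)) {c ε : ℝ} (hc : c < ε) :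
    mBall I g (ContinuousMap.const X c) ⊆ uBall I g ε :=
  fun _ ⟨hgh, hI⟩ => ⟨⟨c, hc, fun x => (hgh x).le⟩, hI⟩

lemma exists_mem_ideal_abs_le_and_eq {x₀ : X} (hx₀ : x₀ ∉ zInter I) {c : ℝ} (hc : 0 ≤ c) :
    ∃ h ∈ I, (∀ x, |h x| ≤ c) ∧ h x₀ = c := by
  obtain ⟨g, hgI, hg⟩ : ∃ g ∈ I, g x₀ ≠ 0 := by simpa [zInter] using hx₀
  have hq : ∀ x, 0 < max (g x₀ ^ 2) (g x ^ 2) := fun x => lt_max_of_lt_left (by positivity)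
  -- `h = c g² / max (g x₀²) g²`, written as a multiple of `g` so that it lies in `I`
  let k : C(X, ℝ) := ⟨fun x => c * g x / max (g x₀ ^ 2) (g x ^ 2),
    (continuous_const.mul g.continuous).div (continuous_const.max (g.continuous.pow 2))
      fun x => (hq x).ne'⟩
  have hval : ∀ x, (g * k) x = c * (g x ^ 2 / max (g x₀ ^ 2) (g x ^ 2)) := fun x => by
    change g x * (c * g x / _) = _
    ring
  refine ⟨g * k, I.mul_mem_right k hgI, fun x => ?_, ?_⟩
  · have : g x ^ 2 / max (g x₀ ^ 2) (g x ^ 2) ≤ 1 :=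
      div_le_one_of_le₀ (le_max_right _ _) (hq x).le
    rw [hval, abs_of_nonneg (by positivity)]
    exact mul_le_of_le_one_right hc this
  · rw [hval, max_self, div_self (pow_ne_zero 2 hg), mul_one]

lemma uBall_subset_mBall_iff {g v : C(X, ℝ)} (hv : ∀ x, 0 < v x) {δ : ℝ} (hδ : 0 < δ) :
    uBall I g δ ⊆ mBall I g v ↔ ∀ x ∉ zInter I, δ ≤ v x := by
  constructor
  · refine fun hsub x hx => le_of_forall_lt fun c hc => ?_
    obtain ⟨h, hI, hle, hx⟩ := exists_mem_ideal_abs_le_and_eq hx (le_max_right c 0)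
    have hmem : g - h ∈ uBall I g δ :=
      ⟨⟨max c 0, max_lt hc hδ, fun y => by simpa using hle y⟩, by simpa using hI⟩
    have := (hsub hmem).1 x
    simp only [ContinuousMap.sub_apply, sub_sub_cancel, hx] at this
    exact (le_max_left c 0).trans_lt ((le_abs_self _).trans_lt this)
  · rintro hδv h ⟨⟨M, hM, hMb⟩, hI⟩
    refine ⟨fun x => ?_, hI⟩
    by_cases hx : x ∈ zInter I
    · have : g x - h x = 0 := by simpa using hx _ hI
      simpa [this] using hv x
    · exact (hMb x).trans_lt (hM.trans_le (hδv x hx))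

lemma exists_uBall_subset_of_isOpen {s : Set C(X, ℝ)} (hs : IsOpen[uTopology I] s) :
    ∀ g ∈ s, ∃ δ > 0, uBall I g δ ⊆ s := by
  induction hs with
  | basic b hb =>
    obtain ⟨f, ε, -, rfl⟩ := hb
    exact fun g hg => uBall_subset_uBall_of_mem hg
  | univ => exact fun g _ => ⟨1, one_pos, subset_univ _⟩
  | inter s t _ _ ihs iht =>
    intro g ⟨hgs, hgt⟩
    obtain ⟨δ, hδ, hδs⟩ := ihs g hgs
    obtain ⟨δ', hδ', hδ't⟩ := iht g hgt
    exact ⟨min δ δ', lt_min hδ hδ', subset_inter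
      ((uBall_subset_uBall g (min_le_left _ _)).trans hδs)
      ((uBall_subset_uBall g (min_le_right _ _)).trans hδ't)⟩
  | sUnion S _ ih =>
    rintro g ⟨t, ht, hgt⟩
    obtain ⟨δ, hδ, hδt⟩ := ih t ht g hgt
    exact ⟨δ, hδ, hδt.trans (subset_sUnion_of_mem ht)⟩

lemma isOpen_mBall (f : C(X, ℝ)) {u : C(X, ℝ)} (hu : ∀ x, 0 < u x) :
    IsOpen[mTopology I] (mBall I f u) :=
  isOpen_generateFrom_of_mem ⟨f, u, hu, rfl⟩

lemma mTopology_le_uTopology (I : Ideal C(X, ℝ)) : mTopology I ≤ uTopology I := by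
  refine le_generateFrom fun _ ⟨f, ε, _, hs⟩ =>
    hs ▸ (@isOpen_iff_forall_mem_open _ (mTopology I) _).2 fun g hg => ?_
  obtain ⟨δ, hδ, hδf⟩ := uBall_subset_uBall_of_mem hg
  exact ⟨_, (mBall_const_subset_uBall g (half_lt_self hδ)).trans hδf,
    isOpen_mBall g fun _ => half_pos hδ, mem_mBall_self g fun _ => half_pos hδ⟩

lemma uTopology_le_mTopology (hI : IPseudocompact I) : uTopology I ≤ mTopology I := by
  refine le_generateFrom fun _ ⟨f, u, _, hs⟩ =>
    hs ▸ (@isOpen_iff_forall_mem_open _ (uTopology I) _).2 fun g hg => ?_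
  have hv : ∀ x, 0 < (u - |f - g|) x := fun x => by simpa using hg.1 x
  obtain ⟨ε, hε, hεv⟩ := boundedOn_iff_forall_pos.1 hI _ hv
  exact ⟨_, ((uBall_subset_mBall_iff hv hε).2 hεv).trans (mBall_subset_mBall_of_mem hg),
    isOpen_generateFrom_of_mem ⟨g, ε, hε, rfl⟩, mem_uBall_self g hε⟩

end Balls

theorem stmt_1_general {X : Type*} [TopologicalSpace X] (I : Ideal C(X, ℝ)) :
    uTopology I = mTopology I ↔ IPseudocompact I := by
  refine ⟨fun heq => ?_, fun hI =>
    le_antisymm (uTopology_le_mTopology hI) (mTopology_le_uTopology I)⟩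
  refine boundedOn_iff_forall_pos.2 fun v hv => ?_
  have hopen : IsOpen[uTopology I] (mBall I 0 v) := heq ▸ isOpen_mBall 0 hv
  obtain ⟨δ, hδ, hsub⟩ := exists_uBall_subset_of_isOpen hopen 0 (mem_mBall_self 0 hv)
  exact ⟨δ, hδ, (uBall_subset_mBall_iff hv hδ).1 hsub⟩

/-- the `u^I`-topology and the `m^I`-topology on `C(X)` coincide
if and only if `X` is `I`-pseudocompact. -/
theorem stmt_1 {X : Type*} [TopologicalSpace X] [T35Space X] (I : Ideal C(X, ℝ)) :
    uTopology I = mTopology I ↔ IPseudocompact I :=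
  stmt_1_general I
end

section
/- Let I be an ideal of C(X). Then X is I-pseudocompact if and only if there exists a countable family F ⊆ C(X) that is dominating on X ∖ ⋂Z[I], i.e., for every f ∈ C(X) there is g ∈ F with f(x) ≤ g(x) for all x ∈ X ∖ ⋂Z[I]. -/
/-!
If `f` is unbounded on `A`, pick `x n ∈ A` with `n ≤ |f (x n)|` and enumerate a countable family
as `g n`. A continuous `φ : ℝ → ℝ` with `φ t > g n (x n)` for `t ≥ n` exists, because locally only
finitely many constraints are active; then `φ ∘ |f|` exceeds `g n` at `x n` for every `n`, so it is
not dominated by the family. Conversely, the constants `n : ℕ` dominate on a bounded set.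
-/

open Set Topology TopologicalSpace Pointwise

theorem exists_continuousMap_le_of_natCast_le (c : ℕ → ℝ) :
    ∃ φ : C(ℝ, ℝ), ∀ (n : ℕ) (t : ℝ), (n : ℝ) ≤ t → c n ≤ φ t := by
  set S : ℝ → Set ℝ := fun t => {y | ∀ n : ℕ, (n : ℝ) ≤ t → c n ≤ y}
  have hS : ∀ t, Convex ℝ (S t) := fun t => by
    simp only [S, ofPred_forall]
    exact convex_iInter fun n => convex_iInter fun _ => convex_Ici (c n)
  -- near `t₀` only the indices `n ≤ ⌈t₀⌉₊` matter
  have hloc : ∀ t₀, ∃ C, ∀ᶠ t in 𝓝 t₀, C ∈ S t := fun t₀ => by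
    refine ⟨∑ k ∈ Finset.range (⌈t₀⌉₊ + 1), |c k|, ?_⟩
    filter_upwards [Iio_mem_nhds (lt_add_one t₀)] with t ht n hn
    have hn' : n ∈ Finset.range (⌈t₀⌉₊ + 1) := by
      rw [Finset.mem_range, ← Nat.cast_lt (α := ℝ), Nat.cast_add_one]
      exact (hn.trans_lt ht).trans_le (by gcongr; exact Nat.le_ceil t₀)
    exact (le_abs_self _).trans
      (Finset.single_le_sum (f := fun k => |c k|) (fun k _ => abs_nonneg _) hn')
  obtain ⟨φ, hφ⟩ := exists_continuous_forall_mem_convex_of_local_const hS hloc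
  exact ⟨φ, fun n t => hφ t n⟩

section Dominating

variable {X : Type*} [TopologicalSpace X]

def DominatingOn (F : Set C(X, ℝ)) (A : Set X) : Prop :=
  ∀ f : C(X, ℝ), ∃ g ∈ F, ∀ x ∈ A, f x ≤ g x

theorem BoundedOn.exists_countable_dominatingOn {A : Set X} (hA : BoundedOn A) :
    ∃ F : Set C(X, ℝ), F.Countable ∧ DominatingOn F A := by
  refine ⟨range fun n : ℕ => ContinuousMap.const X (n : ℝ), countable_range _, fun f => ?_⟩
  obtain ⟨M, hM⟩ := hA f
  refine ⟨_, mem_range_self ⌈M⌉₊, fun x hx => ?_⟩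
  calc f x ≤ |f x| := le_abs_self _
    _ ≤ M := hM x hx
    _ ≤ ⌈M⌉₊ := Nat.le_ceil M

theorem DominatingOn.boundedOn {F : Set C(X, ℝ)} {A : Set X} (hF : F.Countable)
    (hdom : DominatingOn F A) : BoundedOn A := by
  intro f
  by_contra! hunb
  choose x hxA hfx using fun n : ℕ => hunb n
  obtain ⟨G, hFG⟩ := countable_iff_exists_subset_range.1 hF
  obtain ⟨φ, hφ⟩ := exists_continuousMap_le_of_natCast_le fun n => G n (x n) + 1
  obtain ⟨g, hgF, hg⟩ := hdom (φ.comp |f|)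
  obtain ⟨n, rfl⟩ := hFG hgF
  have hφn : G n (x n) + 1 ≤ φ |f (x n)| := hφ n _ (hfx n).le
  have hgn : φ |f (x n)| ≤ G n (x n) := hg (x n) (hxA n)
  linarith

theorem boundedOn_iff_exists_countable_dominatingOn (A : Set X) :
    BoundedOn A ↔ ∃ F : Set C(X, ℝ), F.Countable ∧ DominatingOn F A :=
  ⟨BoundedOn.exists_countable_dominatingOn, fun ⟨_, hF, hdom⟩ => hdom.boundedOn hF⟩

end Dominating

theorem stmt_8_general {X : Type*} [TopologicalSpace X] (I : Ideal C(X, ℝ)) :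
    IPseudocompact I ↔
      ∃ F : Set C(X, ℝ), F.Countable ∧
        ∀ f : C(X, ℝ), ∃ g ∈ F, ∀ x ∈ (zInter I)ᶜ, f x ≤ g x :=
  boundedOn_iff_exists_countable_dominatingOn (zInter I)ᶜ

/-- `X` is `I`-pseudocompact if and only if there is a countable
family `F ⊆ C(X)` dominating on `X ∖ ⋂ Z[I]`. -/
theorem stmt_8 {X : Type*} [TopologicalSpace X] [T35Space X] (I : Ideal C(X, ℝ)) :
    IPseudocompact I ↔
      ∃ F : Set C(X, ℝ), F.Countable ∧
        ∀ f : C(X, ℝ), ∃ g ∈ F, ∀ x ∈ (zInter I)ᶜ, f x ≤ g x :=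
  stmt_8_general I
end

section
/- Let I be an ideal of C(X) such that X is I-pseudocompact. Then every f ∈ I has pseudocompact support: the closure in X of the cozero set {x ∈ X : f(x) ≠ 0}, regarded as a subspace of X, is pseudocompact (every continuous real-valued function on this subspace is bounded). -/
open Set Topology TopologicalSpace Pointwise

/-
If `f ∈ I`, the cozero set `U` of `f` is open and misses `⋂ Z[I]`, so it is a bounded subset of `X`.
Suppose `g` is continuous and unbounded on `cl U`; by density it is unbounded on `U`, so there are
`p n ∈ U` with `|g (p n)| + 2 ≤ |g (p (n + 1))|`. The open sets `V n ⊆ U` on which `|g|` is within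
`1` of `|g (p n)|` are pairwise disjoint, and locally finite in `X` because `cl U` is closed and the
intervals around the values `|g (p n)| → ∞` are locally finite in `ℝ`. Summing bump functions
supported in the `V n` (complete regularity) gives `H ∈ C(X)` with `H (p n) = n`, unbounded on `U`.
-/

open Filter Function Metric

section

variable {X : Type*} [TopologicalSpace X]

lemma BoundedOn.mono {s t : Set X} (ht : BoundedOn t) (hst : s ⊆ t) : BoundedOn s := fun f ↦
  (ht f).imp fun _ hM x hx ↦ hM x (hst hx)

lemma cozero_subset_compl_zInter {I : Ideal C(X, ℝ)} {f : C(X, ℝ)} (hf : f ∈ I) :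
    {x | f x ≠ 0} ⊆ (zInter I)ᶜ :=
  fun _ hx hz ↦ hx (hz f hf)

lemma LocallyFinite.image_of_isClosedEmbedding {Y ι : Type*} [TopologicalSpace Y] {e : Y → X}
    (he : IsClosedEmbedding e) {s : ι → Set Y} (hs : LocallyFinite s) :
    LocallyFinite fun i ↦ e '' s i := by
  intro x
  by_cases hx : x ∈ range e
  · obtain ⟨y, rfl⟩ := hx
    obtain ⟨t, ht, hfin⟩ := hs y
    rw [he.isInducing.nhds_eq_comap, mem_comap] at ht
    obtain ⟨u, hu, hut⟩ := ht
    refine ⟨u, hu, hfin.subset ?_⟩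
    rintro i ⟨_, ⟨z, hz, rfl⟩, hzu⟩
    exact ⟨z, hz, hut hzu⟩
  · refine ⟨(range e)ᶜ, he.isClosed_range.isOpen_compl.mem_nhds hx, ?_⟩
    convert finite_empty
    ext i
    simp only [mem_ofPred_eq, mem_empty_iff_false, iff_false, not_nonempty_iff_eq_empty]
    exact eq_empty_of_forall_notMem fun _ ⟨hz, hzc⟩ ↦ hzc (image_subset_range e _ hz)

lemma exists_continuous_apply_eq_support_subset [CompletelyRegularSpace X] {x : X} {W : Set X}
    (hW : IsOpen W) (hx : x ∈ W) (c : ℝ) :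
    ∃ φ : X → ℝ, Continuous φ ∧ φ x = c ∧ support φ ⊆ W := by
  obtain ⟨ψ, hψ, hψx, hψW⟩ := CompletelyRegularSpace.completely_regular_isOpen x W hW hx
  refine ⟨fun y ↦ c * (1 - ψ y), by fun_prop, by simp [hψx], fun y hy ↦ ?_⟩
  by_contra hyW
  simp [hψW hyW] at hy

lemma exists_continuousMap_apply_eq_of_locallyFinite [CompletelyRegularSpace X] {ι : Type*}
    {W : ι → Set X} (hW : ∀ i, IsOpen (W i)) (hlf : LocallyFinite W)
    (hdisj : Pairwise (Disjoint on W)) {p : ι → X} (hp : ∀ i, p i ∈ W i) (c : ι → ℝ) :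
    ∃ H : C(X, ℝ), ∀ i, H (p i) = c i := by
  choose φ hφ hφp hφW using fun i ↦ exists_continuous_apply_eq_support_subset (hW i) (hp i) (c i)
  refine ⟨⟨fun x ↦ ∑ᶠ i, φ i x, continuous_finsum hφ (hlf.subset hφW)⟩, fun i ↦ ?_⟩
  rw [ContinuousMap.coe_mk, finsum_eq_single _ i, hφp]
  intro j hji
  by_contra hj
  exact (hdisj hji).notMem_of_mem_right (hp i) (hφW j hj)

end

lemma locallyFinite_ball_of_tendsto {ι : Type*} {a : ι → ℝ} (ha : Tendsto a cofinite atTop)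
    (r : ℝ) : LocallyFinite fun i ↦ ball (a i) r := by
  intro t
  refine ⟨Iio (t + 1), Iio_mem_nhds (lt_add_one t), ?_⟩
  refine (eventually_cofinite.1 (ha.eventually_ge_atTop (t + 1 + r))).subset ?_
  rintro i ⟨y, hyi, hyt⟩ hi
  rw [mem_ball, Real.dist_eq, abs_lt] at hyi
  rw [mem_Iio] at hyt
  linarith

section Spaced

variable {a : ℕ → ℝ}

lemma add_two_mul_sub_le (ha : ∀ n, a n + 2 ≤ a (n + 1)) {m n : ℕ} (hmn : m ≤ n) :
    a m + 2 * ((n : ℝ) - m) ≤ a n := by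
  have : Monotone fun k ↦ a k - 2 * k := monotone_nat_of_le_succ fun k ↦ by
    push_cast
    linarith [ha k]
  linarith [this hmn]

lemma tendsto_atTop_of_add_two_le (ha : ∀ n, a n + 2 ≤ a (n + 1)) : Tendsto a atTop atTop := by
  refine tendsto_atTop_mono (fun n ↦ ?_) (tendsto_atTop_add_const_left _ (a 0)
    (tendsto_natCast_atTop_atTop.const_mul_atTop two_pos))
  simpa using add_two_mul_sub_le ha n.zero_le

lemma pairwise_disjoint_ball_of_add_two_le (ha : ∀ n, a n + 2 ≤ a (n + 1)) :
    Pairwise (Disjoint on fun n ↦ ball (a n) 1) := by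
  refine (pairwise_disjoint_on _).2 fun m n hmn ↦ ball_disjoint_ball ?_
  have := add_two_mul_sub_le ha hmn.le
  have : (m : ℝ) + 1 ≤ n := by exact_mod_cast hmn
  rw [Real.dist_eq, abs_sub_comm, abs_of_nonneg] <;> nlinarith

end Spaced

lemma exists_seq_add_two_le {α : Type*} (P : α → ℝ) (hP : ∀ M, ∃ x, M < P x) :
    ∃ p : ℕ → α, ∀ n, P (p n) + 2 ≤ P (p (n + 1)) := by
  choose q hq using hP
  exact ⟨fun n ↦ n.rec (q 0) fun _ x ↦ q (P x + 2), fun n ↦ (hq _).le⟩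

theorem IsOpen.pseudocompactOn_closure {X : Type*} [TopologicalSpace X] [CompletelyRegularSpace X]
    {U : Set X} (hU : IsOpen U) (hb : BoundedOn U) : PseudocompactOn (closure U) := by
  intro g
  set G : U → ℝ := fun w ↦ |g (inclusion subset_closure w)|
  suffices ∃ M, ∀ w, G w ≤ M by
    obtain ⟨M, hM⟩ := this
    exact ⟨M, fun y ↦ ((denseRange_inclusion_iff subset_closure).2 subset_rfl).induction_on y
      (isClosed_le (by fun_prop) continuous_const) hM⟩
  by_contra! hG
  obtain ⟨p, hp⟩ := exists_seq_add_two_le G hG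
  set V : ℕ → Set X := fun n ↦ (↑) '' (G ⁻¹' ball (G (p n)) 1)
  have hV : ∀ n, IsOpen (V n) := fun n ↦ hU.isOpenMap_subtype_val _
    (isOpen_ball.preimage (by fun_prop))
  have hVlf : LocallyFinite V := by
    refine (((locallyFinite_ball_of_tendsto (Nat.cofinite_eq_atTop ▸
      tendsto_atTop_of_add_two_le hp) 1).preimage_continuous (map_continuous g).abs
      ).image_of_isClosedEmbedding isClosed_closure.isClosedEmbedding_subtypeVal).subset ?_
    rintro n _ ⟨w, hw, rfl⟩
    exact ⟨_, hw, rfl⟩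
  have hVdisj : Pairwise (Disjoint on V) := fun m n hmn ↦
    (disjoint_image_iff Subtype.val_injective).2
      ((pairwise_disjoint_ball_of_add_two_le hp hmn).preimage G)
  obtain ⟨H, hH⟩ := exists_continuousMap_apply_eq_of_locallyFinite hV hVlf hVdisj
    (fun n ↦ ⟨p n, mem_ball_self one_pos, rfl⟩) (fun n : ℕ ↦ (n : ℝ))
  obtain ⟨M, hM⟩ := hb H
  obtain ⟨n, hn⟩ := exists_nat_gt M
  have := hM _ (p n).2
  rw [hH, Nat.abs_cast] at this
  linarith

/-- if `X` is `I`-pseudocompact then every `f ∈ I` has pseudocompact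
support: the closure in `X` of `{x : f x ≠ 0}` is a pseudocompact subspace. -/
theorem stmt_9 {X : Type*} [TopologicalSpace X] [T35Space X] (I : Ideal C(X, ℝ))
    (h : IPseudocompact I) (f : C(X, ℝ)) (hf : f ∈ I) :
    PseudocompactOn (closure {x : X | f x ≠ 0}) :=
  (isOpen_ne_fun (map_continuous f) continuous_const).pseudocompactOn_closure
    (BoundedOn.mono h (cozero_subset_compl_zInter hf))
end

section
/- Let X be a Tychonoff space that is locally pseudocompact (every point has a pseudocompact neighborhood) but not pseudocompact. Then for every ideal I of C(X) such that X is I-pseudocompact, there exists an ideal J of C(X) with I strictly contained in J such that X is J-pseudocompact. -/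
open Set Topology TopologicalSpace Pointwise

/-!
If every `f ∈ C(X)` with bounded cozero set belonged to `I`, local pseudocompactness and complete
regularity would give, at each point, such an `f` not vanishing there, so `⋂ Z[I] = ∅` and
`I`-pseudocompactness would make `X` pseudocompact. Hence some `f ∉ I` has bounded cozero set,
and `J = I + (f)` works: `X ∖ ⋂ Z[J]` is the union of `X ∖ ⋂ Z[I]` and the cozero set of `f`.
-/

section

variable {X : Type*} [TopologicalSpace X]

theorem BoundedOn.mono_s11 {Y Y' : Set X} (h : BoundedOn Y') (hY : Y ⊆ Y') : BoundedOn Y :=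
  fun f ↦ (h f).imp fun _ hM x hx ↦ hM x (hY hx)

theorem BoundedOn.union {Y Y' : Set X} (h : BoundedOn Y) (h' : BoundedOn Y') :
    BoundedOn (Y ∪ Y') := fun f ↦ by
  obtain ⟨M, hM⟩ := h f
  obtain ⟨M', hM'⟩ := h' f
  refine ⟨max M M', fun x hx ↦ hx.elim (fun hx ↦ ?_) fun hx ↦ ?_⟩
  · exact (hM x hx).trans (le_max_left _ _)
  · exact (hM' x hx).trans (le_max_right _ _)

theorem PseudocompactOn.boundedOn {S : Set X} (h : PseudocompactOn S) : BoundedOn S :=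
  fun f ↦ (h (f.restrict S)).imp fun _ hM x hx ↦ hM ⟨x, hx⟩

theorem exists_continuousMap_ne_zero_support_subset [CompletelyRegularSpace X] {x : X}
    {N : Set X} (hN : N ∈ 𝓝 x) : ∃ g : C(X, ℝ), g x ≠ 0 ∧ Function.support g ⊆ N := by
  obtain ⟨f, hf, hfx, hfN⟩ := CompletelyRegularSpace.completely_regular_isOpen x (interior N)
    isOpen_interior (mem_interior_iff_mem_nhds.mpr hN)
  refine ⟨⟨fun y ↦ 1 - f y, continuous_const.sub (continuous_subtype_val.comp hf)⟩, ?_, ?_⟩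
  · simp [hfx]
  · intro y hy
    by_contra hyN
    exact hy (by simp [hfN fun h ↦ hyN (interior_subset h)])

theorem compl_zInter_sup_span_singleton_subset (I : Ideal C(X, ℝ)) (f : C(X, ℝ)) :
    (zInter (I ⊔ Ideal.span {f}))ᶜ ⊆ (zInter I)ᶜ ∪ Function.support f := by
  intro x hx
  by_contra! h
  simp only [mem_union, mem_compl_iff, Function.mem_support, not_or, not_not] at h
  refine hx fun g hg ↦ ?_
  obtain ⟨a, ha, b, hb, rfl⟩ := Submodule.mem_sup.mp hg
  obtain ⟨c, rfl⟩ := Ideal.mem_span_singleton'.mp hb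
  simp [h.1 a ha, h.2]

theorem IPseudocompact.sup_span_singleton {I : Ideal C(X, ℝ)} (hI : IPseudocompact I)
    {f : C(X, ℝ)} (hf : BoundedOn (Function.support f)) :
    IPseudocompact (I ⊔ Ideal.span {f}) :=
  (hI.union hf).mono_s11 (compl_zInter_sup_span_singleton_subset I f)

theorem IPseudocompact.forall_bounded_of_zInter_eq_empty {I : Ideal C(X, ℝ)}
    (hI : IPseudocompact I) (h : zInter I = ∅) (f : C(X, ℝ)) :
    ∃ M : ℝ, ∀ x : X, |f x| ≤ M :=
  (hI f).imp fun _ hM x ↦ hM x (by simp [h])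

theorem zInter_eq_empty_of_boundedOn_support_mem [CompletelyRegularSpace X]
    (hloc : ∀ x : X, ∃ N ∈ 𝓝 x, PseudocompactOn N) {I : Ideal C(X, ℝ)}
    (hI : ∀ f : C(X, ℝ), BoundedOn (Function.support f) → f ∈ I) : zInter I = ∅ := by
  refine eq_empty_of_forall_notMem fun x hx ↦ ?_
  obtain ⟨N, hN, hNpc⟩ := hloc x
  obtain ⟨g, hgx, hgN⟩ := exists_continuousMap_ne_zero_support_subset hN
  exact hgx (hx g (hI g (hNpc.boundedOn.mono_s11 hgN)))

end

/-- if `X` is locally pseudocompact but not pseudocompact, then for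
every ideal `I` with `X` `I`-pseudocompact there is a strictly larger ideal `J`
with `X` `J`-pseudocompact. -/
theorem stmt_11 {X : Type*} [TopologicalSpace X] [T35Space X]
    (hloc : ∀ x : X, ∃ N ∈ nhds x, PseudocompactOn N)
    (hnp : ¬ ∀ f : C(X, ℝ), ∃ M : ℝ, ∀ x : X, |f x| ≤ M)
    (I : Ideal C(X, ℝ)) (hI : IPseudocompact I) :
    ∃ J : Ideal C(X, ℝ), I < J ∧ IPseudocompact J := by
  obtain ⟨f, hf, hfI⟩ : ∃ f : C(X, ℝ), BoundedOn (Function.support f) ∧ f ∉ I := by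
    by_contra! hall
    exact hnp (hI.forall_bounded_of_zInter_eq_empty
      (zInter_eq_empty_of_boundedOn_support_mem hloc hall))
  exact ⟨I ⊔ Ideal.span {f}, Submodule.lt_sup_iff_notMem.mpr hfI, hI.sup_span_singleton hf⟩
end

section
/- Let I be a fixed ideal of C(X), i.e., ⋂Z[I] ≠ ∅. Then C(X) with the u^I-topology is not ℵ₀-bounded: there exists a u^I-neighborhood V of the zero function (namely V = B_u(0,I,1)) such that for no countable subset D ⊆ C(X) does one have C(X) = D + V = {d + v : d ∈ D, v ∈ V}. -/
open Set Topology TopologicalSpace Pointwise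

/-! Every member of `B_u(0, I, ε)` lies in `I` and so vanishes at each point `x₀ ∈ ⋂ Z[I]`.
Hence if `C(X) = D + B_u(0, I, ε)`, evaluation at `x₀` maps `D` onto `ℝ` (hit the constants),
which is impossible for countable `D`. -/

section UTopology

variable {X : Type*} [TopologicalSpace X] {I : Ideal C(X, ℝ)}

theorem uBall_mem_nhds (f : C(X, ℝ)) {ε : ℝ} (hε : 0 < ε) :
    uBall I f ε ∈ @nhds C(X, ℝ) (uTopology I) f :=
  @IsOpen.mem_nhds _ (uTopology I) _ _ (isOpen_generateFrom_of_mem ⟨f, ε, hε, rfl⟩)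
    ⟨⟨0, hε, fun x => by simp⟩, by simp⟩

theorem apply_eq_zero_of_mem_uBall_zero {x : X} (hx : x ∈ zInter I) {v : C(X, ℝ)} {ε : ℝ}
    (hv : v ∈ uBall I 0 ε) : v x = 0 :=
  hx v (I.neg_mem_iff.mp (by simpa using hv.2))

theorem apply_mem_image_of_mem_add_uBall_zero {x : X} (hx : x ∈ zInter I) {D : Set C(X, ℝ)}
    {ε : ℝ} {f : C(X, ℝ)} (hf : f ∈ D + uBall I 0 ε) : f x ∈ (fun d : C(X, ℝ) => d x) '' D := by
  obtain ⟨d, hd, v, hv, rfl⟩ := hf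
  exact ⟨d, hd, by simp [apply_eq_zero_of_mem_uBall_zero hx hv]⟩

theorem not_countable_of_forall_mem_add_uBall_zero {x : X} (hx : x ∈ zInter I)
    {D : Set C(X, ℝ)} {ε : ℝ} (hD : ∀ f : C(X, ℝ), f ∈ D + uBall I 0 ε) : ¬ D.Countable := by
  intro hcount
  have hsurj : univ ⊆ (fun d : C(X, ℝ) => d x) '' D := fun r _ =>
    apply_mem_image_of_mem_add_uBall_zero hx (hD (ContinuousMap.const X r))
  exact Cardinal.not_countable_real ((hcount.image _).mono hsurj)

end UTopology

theorem stmt_12_general {X : Type*} [TopologicalSpace X] (I : Ideal C(X, ℝ))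
    (hfix : (zInter I).Nonempty) :
    uBall I 0 1 ∈ @nhds C(X, ℝ) (uTopology I) 0 ∧
    ¬ ∃ D : Set C(X, ℝ), D.Countable ∧ ∀ f : C(X, ℝ), f ∈ D + uBall I 0 1 := by
  obtain ⟨x, hx⟩ := hfix
  refine ⟨uBall_mem_nhds 0 one_pos, ?_⟩
  rintro ⟨D, hD, hall⟩
  exact not_countable_of_forall_mem_add_uBall_zero hx hall hD

/-- if `I` is a fixed ideal (`⋂ Z[I] ≠ ∅`), then `C(X)` with the
`u^I`-topology is not `ℵ₀`-bounded: the neighborhood `V = B_u(0, I, 1)` of `0`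
satisfies `C(X) ≠ D + V` for every countable `D ⊆ C(X)`. -/
theorem stmt_12 {X : Type*} [TopologicalSpace X] [T35Space X] (I : Ideal C(X, ℝ))
    (hfix : (zInter I).Nonempty) :
    uBall I 0 1 ∈ @nhds C(X, ℝ) (uTopology I) 0 ∧
    ¬ ∃ D : Set C(X, ℝ), D.Countable ∧ ∀ f : C(X, ℝ), f ∈ D + uBall I 0 1 :=
  stmt_12_general I hfix
end

section
/- Let I be an ideal of C(X). The space C(X) equipped with the m^I-topology is σ-compact (a countable union of compact subsets) if and only if X is finite and I = C(X). -/
open Set Topology TopologicalSpace Pointwise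

/-!
If `C(X)` is σ-compact in the `m^I`-topology, then for every real subspace `S` containing the
ball `B_m(0, I, 1)` the cosets of `S` are open, hence only countably many, so `C(X) ⧸ S` is a
countable real vector space and `S = C(X)`. Taking `S = I` gives `I = C(X)`; taking for `S` the
bounded functions shows that every `f ∈ C(X)` is bounded. Then the `m`-topology is finer than
the uniform one, so the Banach space `Cᵇ(X)` is σ-compact, hence finite-dimensional by Baire's
and Riesz's theorems, and complete regularity makes `X` finite. Conversely, for finite (hence
discrete) `X`, the `m`-topology of `C(X) = ℝ^X` is the product topology, which is σ-compact.
-/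

open BoundedContinuousFunction Function

lemma Function.Surjective.sigmaCompactSpace {X Y : Type*} [TopologicalSpace X]
    [TopologicalSpace Y] [SigmaCompactSpace X] {f : X → Y} (hf : Continuous f)
    (hs : Surjective f) : SigmaCompactSpace Y :=
  isSigmaCompact_univ_iff.mp (hs.range_eq ▸ isSigmaCompact_range hf)

lemma countable_range_of_isOpen_preimage_singleton {X Y : Type*} [TopologicalSpace X]
    [SigmaCompactSpace X] {q : X → Y} (hq : ∀ x, IsOpen (q ⁻¹' {q x})) : (range q).Countable := by
  let : TopologicalSpace Y := ⊥
  have : DiscreteTopology Y := ⟨rfl⟩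
  have hcont : Continuous q := continuous_discrete_rng.mpr fun y => by
    by_cases hy : y ∈ range q
    · obtain ⟨x, rfl⟩ := hy
      exact hq x
    · rw [preimage_singleton_eq_empty.mpr hy]
      exact isOpen_empty
  obtain ⟨K, hK, hKU⟩ := isSigmaCompact_range hcont
  rw [← hKU]
  exact countable_iUnion fun n => (hK n).finite_of_discrete.countable

lemma Module.subsingleton_of_countable (K V : Type*) [DivisionRing K] [Uncountable K]
    [AddCommGroup V] [Module K V] [Countable V] : Subsingleton V := by
  refine subsingleton_iff_forall_eq 0 |>.mpr fun v => ?_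
  by_contra hv
  exact not_countable (smul_left_injective K hv).countable

lemma FiniteDimensional.of_sigmaCompactSpace (𝕜 : Type*) {E : Type*} [NontriviallyNormedField 𝕜]
    [CompleteSpace 𝕜] [AddCommGroup E] [Module 𝕜 E] [TopologicalSpace E]
    [IsTopologicalAddGroup E] [ContinuousSMul 𝕜 E] [T2Space E] [BaireSpace E] [Nonempty E]
    [SigmaCompactSpace E] : FiniteDimensional 𝕜 E := by
  obtain ⟨n, x, hx⟩ := nonempty_interior_of_iUnion_of_closed
    (fun n => (isCompact_compactCovering E n).isClosed) (iUnion_compactCovering E)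
  have := (isCompact_compactCovering E n).locallyCompactSpace_of_mem_nhds_of_addGroup
    (mem_interior_iff_mem_nhds.mp hx)
  exact .of_locallyCompactSpace 𝕜

lemma BoundedContinuousFunction.exists_eq_one_eqOn_zero {X : Type*} [TopologicalSpace X]
    [CompletelyRegularSpace X] {x : X} {K : Set X} (hK : IsClosed K) (hx : x ∉ K) :
    ∃ F : X →ᵇ ℝ, F x = 1 ∧ EqOn F 0 K := by
  obtain ⟨f, hf, hfx, hfK⟩ := CompletelyRegularSpace.completely_regular x K hK hx
  let σ : unitInterval →ᵇ ℝ := mkOfCompact ⟨fun t => 1 - t, by fun_prop⟩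
  refine ⟨σ.compContinuous ⟨f, hf⟩, by simp [σ, hfx], fun y hy => ?_⟩
  simp [σ, hfK hy]

lemma Finite.of_finiteDimensional_boundedContinuousFunction {X : Type*} [TopologicalSpace X]
    [T1Space X] [CompletelyRegularSpace X] [FiniteDimensional ℝ (X →ᵇ ℝ)] : Finite X := by
  by_contra hX
  rw [not_finite_iff_infinite] at hX
  obtain ⟨s, hs⟩ := Infinite.exists_subset_card_eq X (Module.finrank ℝ (X →ᵇ ℝ) + 1)
  have hbump : ∀ x : s, ∃ F : X →ᵇ ℝ, F x = 1 ∧ EqOn F 0 (Subtype.val '' {y : s | y ≠ x}) :=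
    fun x => exists_eq_one_eqOn_zero (toFinite _).isClosed (by simp)
  choose G hG1 hG0 using hbump
  have hli : LinearIndependent ℝ G := by
    rw [Fintype.linearIndependent_iff]
    intro c hc y
    have := congrArg (fun F : X →ᵇ ℝ => F y) hc
    simp only [coe_sum, coe_smul, Finset.sum_apply, smul_eq_mul, coe_zero,
      Pi.zero_apply] at this
    rwa [Finset.sum_eq_single_of_mem y (Finset.mem_univ y)
      fun x _ hxy => by rw [hG0 x ⟨y, hxy.symm, rfl⟩, Pi.zero_apply, mul_zero], hG1, mul_one]
      at this
  have := hli.fintype_card_le_finrank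
  simp only [Fintype.card_coe, hs] at this
  omega

section mTopology

variable {X : Type*} [TopologicalSpace X]

lemma mBall_mem_nhds (I : Ideal C(X, ℝ)) {f u : C(X, ℝ)} (hu : ∀ x, 0 < u x) :
    mBall I f u ∈ @nhds _ (mTopology I) f :=
  @IsOpen.mem_nhds _ (mTopology I) _ _ (isOpen_generateFrom_of_mem ⟨f, u, hu, rfl⟩)
    ⟨fun x => by simpa using hu x, by simp⟩

lemma sub_mem_mBall_zero {I : Ideal C(X, ℝ)} {f g u : C(X, ℝ)} (hg : g ∈ mBall I f u) :
    g - f ∈ mBall I 0 u :=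
  ⟨fun x => by simpa [abs_sub_comm] using hg.1 x, by simpa using hg.2⟩

lemma Submodule.eq_top_of_mBall_subset {I : Ideal C(X, ℝ)}
    (hσ : @SigmaCompactSpace C(X, ℝ) (mTopology I)) {S : Submodule ℝ C(X, ℝ)}
    (hS : mBall I 0 1 ⊆ S) : S = ⊤ := by
  let := mTopology I
  have hfiber : ∀ f : C(X, ℝ), IsOpen ((Submodule.Quotient.mk : C(X, ℝ) → C(X, ℝ) ⧸ S) ⁻¹'
      {Submodule.Quotient.mk f}) := by
    refine fun f => isOpen_iff_mem_nhds.mpr fun g hg => Filter.mem_of_superset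
      (mBall_mem_nhds I (u := 1) fun _ => one_pos) fun h hh => ?_
    exact ((Submodule.Quotient.eq S).mpr (hS (sub_mem_mBall_zero hh))).trans hg
  have : Countable (C(X, ℝ) ⧸ S) := countable_univ_iff.mp <|
    (Submodule.Quotient.mk_surjective S).range_eq ▸
      countable_range_of_isOpen_preimage_singleton hfiber
  have := Module.subsingleton_of_countable ℝ (C(X, ℝ) ⧸ S)
  exact Submodule.Quotient.subsingleton_iff.mp this

lemma Ideal.eq_top_of_sigmaCompactSpace_mTopology {I : Ideal C(X, ℝ)}
    (hσ : @SigmaCompactSpace C(X, ℝ) (mTopology I)) : I = ⊤ :=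
  (Submodule.restrictScalars_eq_top_iff ..).mp <| Submodule.eq_top_of_mBall_subset hσ
    (S := I.restrictScalars ℝ) fun _ hg => by simpa using hg.2

lemma surjective_toContinuousMap_of_sigmaCompactSpace_mTopology
    (hσ : @SigmaCompactSpace C(X, ℝ) (mTopology ⊤)) :
    Surjective (toContinuousMapLinearMap X ℝ ℝ) := by
  refine LinearMap.range_eq_top.mp <| Submodule.eq_top_of_mBall_subset hσ fun g hg =>
    ⟨mkOfBound g 2 fun x y => ?_, rfl⟩
  have hx : |g x| < 1 := by simpa using hg.1 x
  have hy : |g y| < 1 := by simpa using hg.1 y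
  rw [Real.dist_eq]
  linarith [abs_sub (g x) (g y)]

lemma sigmaCompactSpace_boundedContinuousFunction_of_surjective
    (hσ : @SigmaCompactSpace C(X, ℝ) (mTopology ⊤))
    (hsurj : Surjective (toContinuousMapLinearMap X ℝ ℝ)) : SigmaCompactSpace (X →ᵇ ℝ) := by
  let e := surjInv hsurj
  have he : ∀ f x, e f x = f x := fun f x => congrArg (· x) (surjInv_eq hsurj f)
  have hcont : Continuous[mTopology ⊤, _] e := by
    refine (@Metric.continuous_iff' _ _ _ (mTopology ⊤) _).mpr fun f ε hε =>
      Filter.mem_of_superset (mBall_mem_nhds ⊤ (u := .const X (ε / 2)) fun _ => half_pos hε)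
        fun g hg => ?_
    refine lt_of_le_of_lt ((dist_le (half_pos hε).le).mpr fun x => ?_) (half_lt_self hε)
    rw [he, he, Real.dist_eq, abs_sub_comm]
    exact (hg.1 x).le
  exact @Surjective.sigmaCompactSpace _ _ (mTopology ⊤) _ hσ _ hcont fun F =>
    ⟨F.toContinuousMap, ext fun x => he _ x⟩

lemma sigmaCompactSpace_mTopology_top [T1Space X] [Finite X] :
    @SigmaCompactSpace C(X, ℝ) (mTopology ⊤) := by
  let e : C(X, ℝ) ≃ (X → ℝ) := ContinuousMap.equivFnOfDiscrete
  have hcont : Continuous[_, mTopology ⊤] e.symm := by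
    refine continuous_generateFrom_iff.mpr ?_
    rintro _ ⟨f, u, -, rfl⟩
    have : e.symm ⁻¹' mBall ⊤ f u = ⋂ x, {v | |f x - v x| < u x} := by
      ext v
      simp [mBall, e]
    rw [this]
    exact isOpen_iInter_of_finite fun x => isOpen_lt (by fun_prop) continuous_const
  exact @Surjective.sigmaCompactSpace _ _ _ (mTopology ⊤) _ _ hcont e.symm.surjective

end mTopology

/-- `C(X)` with the `m^I`-topology is `σ`-compact if and only if
`X` is finite and `I = C(X)`. -/
theorem stmt_14 {X : Type*} [TopologicalSpace X] [T35Space X] (I : Ideal C(X, ℝ)) :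
    @SigmaCompactSpace C(X, ℝ) (mTopology I) ↔ (Finite X ∧ I = ⊤) := by
  constructor
  · intro hσ
    obtain rfl := Ideal.eq_top_of_sigmaCompactSpace_mTopology hσ
    have := sigmaCompactSpace_boundedContinuousFunction_of_surjective hσ
      (surjective_toContinuousMap_of_sigmaCompactSpace_mTopology hσ)
    have := FiniteDimensional.of_sigmaCompactSpace ℝ (E := X →ᵇ ℝ)
    exact ⟨Finite.of_finiteDimensional_boundedContinuousFunction, rfl⟩
  · rintro ⟨_, rfl⟩
    exact sigmaCompactSpace_mTopology_top
end

section
/- Let I be an ideal of C(X). In the space C(X) with the u^I-topology, the path component of the zero function and the connected component of the zero function both equal C*(X) ∩ I, where C*(X) is the set of bounded functions in C(X). -/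
open Set Topology TopologicalSpace Pointwise

/-!
Every `u^I`-ball around `f` consists of functions differing from `f` by a bounded member of `I`,
so `C*(X) ∩ I` and its complement are unions of balls: `C*(X) ∩ I` is clopen and contains the
connected component of `0`. Conversely, for bounded `f ∈ I` the segment `t ↦ t • f` moves by
`|t - t₀| · sup |f|` in sup norm and stays inside `I`, so it is a path from `0` to `f`.
-/

/-- `C*(X) ∩ I`. -/
def boundedInter {X : Type*} [TopologicalSpace X] (I : Ideal C(X, ℝ)) : Set C(X, ℝ) :=
  {f | ∃ M : ℝ, ∀ x : X, |f x| ≤ M} ∩ (I : Set C(X, ℝ))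

section

variable {X : Type*} [TopologicalSpace X] {I : Ideal C(X, ℝ)}

lemma isOpen_uBall (f : C(X, ℝ)) {ε : ℝ} (hε : 0 < ε) : IsOpen[uTopology I] (uBall I f ε) :=
  isOpen_generateFrom_of_mem ⟨f, ε, hε, rfl⟩

lemma isOpen_of_forall_uBall_subset {s : Set C(X, ℝ)}
    (h : ∀ f ∈ s, ∃ ε > 0, uBall I f ε ⊆ s) : IsOpen[uTopology I] s := by
  let _ := uTopology I
  refine isOpen_iff_forall_mem_open.2 fun f hf => ?_
  obtain ⟨ε, hε, hsub⟩ := h f hf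
  exact ⟨uBall I f ε, hsub, isOpen_uBall f hε, mem_uBall_self f hε⟩

lemma mem_boundedInter_iff_of_mem_uBall {f g : C(X, ℝ)} {ε : ℝ} (hg : g ∈ uBall I f ε) :
    g ∈ boundedInter I ↔ f ∈ boundedInter I := by
  obtain ⟨⟨M, -, hM⟩, hfg⟩ := hg
  constructor
  · rintro ⟨⟨N, hN⟩, hgI⟩
    refine ⟨⟨N + M, fun x => ?_⟩, by simpa using I.add_mem hgI hfg⟩
    linarith [abs_sub_abs_le_abs_sub (f x) (g x), hN x, hM x]
  · rintro ⟨⟨N, hN⟩, hfI⟩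
    refine ⟨⟨N + M, fun x => ?_⟩, by simpa using I.sub_mem hfI hfg⟩
    linarith [abs_sub_abs_le_abs_sub (g x) (f x), abs_sub_comm (f x) (g x), hN x, hM x]

lemma isClopen_boundedInter : @IsClopen _ (uTopology I) (boundedInter I) := by
  let _ := uTopology I
  exact ⟨isOpen_compl_iff.1 <| isOpen_of_forall_uBall_subset fun f hf =>
      ⟨1, one_pos, fun g hg hgS => hf ((mem_boundedInter_iff_of_mem_uBall hg).1 hgS)⟩,
    isOpen_of_forall_uBall_subset fun f hf =>
      ⟨1, one_pos, fun g hg => (mem_boundedInter_iff_of_mem_uBall hg).2 hf⟩⟩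

/-- Balls are open "in the direction of `I`": a small sup-norm perturbation inside `I` keeps a
point of `uBall I g ε` inside it. -/
lemma exists_add_mem_uBall {g k : C(X, ℝ)} {ε : ℝ} (hk : k ∈ uBall I g ε) :
    ∃ η > 0, ∀ h ∈ I, (∀ x, |h x| ≤ η) → k + h ∈ uBall I g ε := by
  obtain ⟨⟨M, hMε, hM⟩, hgk⟩ := hk
  refine ⟨(ε - M) / 2, by linarith, fun h hI hh =>
    ⟨⟨M + (ε - M) / 2, by linarith, fun x => ?_⟩, ?_⟩⟩
  · have : g x - (k + h) x = (g x - k x) + -h x := by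
      rw [ContinuousMap.add_apply]; ring
    rw [this]
    linarith [abs_add_le (g x - k x) (-h x), abs_neg (h x), hM x, hh x]
  · simpa [sub_add_eq_sub_sub] using I.sub_mem hgk hI

lemma continuous_smul_uTopology {f : C(X, ℝ)} (hfI : f ∈ I)
    (hbdd : ∃ M : ℝ, ∀ x, |f x| ≤ M) :
    Continuous[_, uTopology I] fun t : ℝ => t • f := by
  obtain ⟨M, hM⟩ := hbdd
  rw [uTopology, continuous_generateFrom_iff]
  rintro _ ⟨g, ε, -, rfl⟩
  refine Metric.isOpen_iff.2 fun t₀ ht₀ => ?_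
  obtain ⟨η, hη, hpert⟩ := exists_add_mem_uBall ht₀
  have hM' : 0 < |M| + 1 := by positivity
  refine ⟨η / (|M| + 1), by positivity, fun t ht => ?_⟩
  rw [Metric.mem_ball, Real.dist_eq] at ht
  have hsplit : t • f = t₀ • f + (t - t₀) • f := by rw [sub_smul]; abel
  show t • f ∈ uBall I g ε
  rw [hsplit]
  refine hpert _ (by simpa [Algebra.smul_def] using I.mul_mem_left _ hfI) fun x => ?_
  calc |((t - t₀) • f) x| = |t - t₀| * |f x| := by simp [abs_mul]
    _ ≤ η / (|M| + 1) * (|M| + 1) := by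
        gcongr; linarith [le_abs_self M, hM x]
    _ = η := div_mul_cancel₀ η hM'.ne'

lemma boundedInter_subset_pathComponent :
    boundedInter I ⊆ @pathComponent _ (uTopology I) 0 := by
  let _ := uTopology I
  rintro f ⟨hbdd, hfI⟩
  let γ : Path (0 : C(X, ℝ)) f :=
    { toFun := fun t => (t : ℝ) • f
      continuous_toFun := (continuous_smul_uTopology hfI hbdd).comp continuous_subtype_val
      source' := by simp
      target' := by simp }
  exact ⟨γ⟩

end

theorem stmt_16_general {X : Type*} [TopologicalSpace X] (I : Ideal C(X, ℝ)) :
    @pathComponent C(X, ℝ) (uTopology I) 0 =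
        {f : C(X, ℝ) | ∃ M : ℝ, ∀ x : X, |f x| ≤ M} ∩ (I : Set C(X, ℝ)) ∧
    @connectedComponent C(X, ℝ) (uTopology I) 0 =
        {f : C(X, ℝ) | ∃ M : ℝ, ∀ x : X, |f x| ≤ M} ∩ (I : Set C(X, ℝ)) := by
  let _ := uTopology I
  have hpath : boundedInter I ⊆ pathComponent 0 := boundedInter_subset_pathComponent
  have hconn : connectedComponent (0 : C(X, ℝ)) ⊆ boundedInter I :=
    isClopen_boundedInter.connectedComponent_subset ⟨⟨0, fun x => by simp⟩, I.zero_mem⟩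
  have hpc : pathComponent (0 : C(X, ℝ)) ⊆ connectedComponent 0 :=
    pathComponent_subset_component 0
  exact ⟨(hpc.trans hconn).antisymm hpath, hconn.antisymm (hpath.trans hpc)⟩

/-- in `C(X)` with the `u^I`-topology, the path component and the
connected component of `0` both equal `C*(X) ∩ I`. -/
theorem stmt_16 {X : Type*} [TopologicalSpace X] [T35Space X] (I : Ideal C(X, ℝ)) :
    @pathComponent C(X, ℝ) (uTopology I) 0 =
        {f : C(X, ℝ) | ∃ M : ℝ, ∀ x : X, |f x| ≤ M} ∩ (I : Set C(X, ℝ)) ∧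
    @connectedComponent C(X, ℝ) (uTopology I) 0 =
        {f : C(X, ℝ) | ∃ M : ℝ, ∀ x : X, |f x| ≤ M} ∩ (I : Set C(X, ℝ)) :=
  stmt_16_general I
end
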